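/- arXiv:1908.09196 — 3 statements merged into one kernel-verified Lean document; each statement's English description precedes it below -/
import Mathlib

section
/- Let L be a subfield of ℂ. Let f, g ∈ ℂ[[t,z]] with all coefficients f_{i,j}, g_{i,j} ∈ L, with g(0,0) ≠ 0, f(0,0) = 0, and such that λ := (∂f/∂z)(0,0)/g(0,0) is not a positive integer. Then all coefficients of the unique power series z ∈ ℂ[[t]] with zero constant term satisfying g(t, z(t))·t·z'(t) = f(t, z(t)) belong to L. -/
/-- The coefficient `f_{i,j}` of `t^i z^j` in a two-variable formal power series,
where variable `0` is `t` and variable `1` is `z`. -/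
noncomputable def fcoeff (f : MvPowerSeries (Fin 2) ℂ) (i j : ℕ) : ℂ :=
  MvPowerSeries.coeff (Finsupp.single 0 i + Finsupp.single 1 j) f

/-- Substitution `f(t, z(t))` (intended for `z` with zero constant term, in which
case `coeff n (X^i * z^j) = 0` for `i + j > n`). -/
noncomputable def subst2 (f : MvPowerSeries (Fin 2) ℂ) (z : PowerSeries ℂ) : PowerSeries ℂ :=
  PowerSeries.mk fun n => ∑ i ∈ Finset.range (n + 1), ∑ j ∈ Finset.range (n + 1),
    fcoeff f i j * (PowerSeries.coeff n) (PowerSeries.X ^ i * z ^ j)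

/-!
Comparing the coefficients of `t^n` on both sides of the equation gives
`(n g₀₀ - f₀₁) zₙ = (a polynomial expression in the f_{ij}, g_{ij} and z₁, …, z_{n-1})`:
`zₙ` enters `f(t, z(t))` only through the monomial `f₀₁ z`, and enters `g(t, z(t)) t z'(t)`
only through `g₀₀ · n zₙ tⁿ`, because `z` has no constant term. Since `λ ≠ n`, the factor
`n g₀₀ - f₀₁` is a nonzero element of `L`, and induction on `n` puts every `zₙ` in `L`.
-/

open PowerSeries Finset

namespace PowerSeries

section CoeffsIn

variable {R S : Type*} [CommSemiring R] [SetLike S R] [SubsemiringClass S R] (s : S)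

def coeffsUpToIn (m : ℕ) : Subsemiring R⟦X⟧ where
  carrier := {p | ∀ k ≤ m, coeff k p ∈ s}
  zero_mem' _ _ := by simp only [map_zero, zero_mem]
  one_mem' k _ := by
    rw [coeff_one]
    split_ifs
    exacts [one_mem s, zero_mem s]
  add_mem' hp hq k hk := by
    rw [map_add]
    exact add_mem (hp k hk) (hq k hk)
  mul_mem' hp hq k hk := by
    rw [coeff_mul]
    exact sum_mem fun x hx => mul_mem (hp _ (by grind [HasAntidiagonal.mem_antidiagonal]))
      (hq _ (by grind [HasAntidiagonal.mem_antidiagonal]))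

variable {s}

theorem X_mem_coeffsUpToIn (m : ℕ) : X ∈ coeffsUpToIn s m := fun k _ => by
  rw [coeff_X]
  split_ifs
  exacts [one_mem s, zero_mem s]

theorem coeff_X_pow_mul_pow_mem {z : R⟦X⟧} {n i j : ℕ} (hz : constantCoeff z = 0)
    (hlow : ∀ k < n, coeff k z ∈ s) (hij : (i, j) ≠ (0, 1)) :
    coeff n (X ^ i * z ^ j) ∈ s := by
  obtain ⟨y, rfl⟩ := X_dvd_iff.mpr hz
  rw [show X ^ i * (X * y) ^ j = X ^ (i + j) * y ^ j by ring, coeff_X_pow_mul']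
  split_ifs with hle
  · rcases Nat.eq_zero_or_pos j with rfl | hj
    · rw [pow_zero]
      exact (coeffsUpToIn s _).one_mem _ le_rfl
    · have hy : y ∈ coeffsUpToIn s (n - (i + j)) := fun k hk => by
        rw [← coeff_succ_X_mul]
        -- `j ≥ 1` and `(i, j) ≠ (0, 1)` force `i + j ≥ 2`, hence `k + 1 < n`
        exact hlow _ (by grind)
      exact pow_mem hy j _ le_rfl
  · exact zero_mem s

end CoeffsIn

theorem coeff_mul_sub_constantCoeff_mul_mem {R S : Type*} [CommRing R] [SetLike S R]
    [SubringClass S R] {s : S} {p q : R⟦X⟧} {n : ℕ} (hq : constantCoeff q = 0)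
    (hp : ∀ k < n, coeff k p ∈ s) (hq' : ∀ k < n, coeff k q ∈ s) :
    coeff n (p * q) - constantCoeff p * coeff n q ∈ s := by
  have h0n : (0, n) ∈ antidiagonal n := by simp
  rw [coeff_mul, ← add_sum_erase _ _ h0n, ← coeff_zero_eq_constantCoeff_apply,
    add_sub_cancel_left]
  refine sum_mem fun x hx => ?_
  obtain ⟨hx0n, hx⟩ := mem_erase.mp hx
  rw [HasAntidiagonal.mem_antidiagonal] at hx
  rcases Nat.eq_zero_or_pos x.2 with hx2 | hx2
  · rw [hx2, coeff_zero_eq_constantCoeff_apply, hq, mul_zero]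
    exact zero_mem s
  · have hx1 : x.1 ≠ 0 := fun h => hx0n (Prod.ext h (by omega))
    exact mul_mem (hp _ (by omega)) (hq' _ (by omega))

theorem coeff_X_mul_derivative {R : Type*} [CommSemiring R] (z : R⟦X⟧) (n : ℕ) :
    coeff n (X * d⁄dX R z) = n * coeff n z := by
  cases n with
  | zero => simp
  | succ n =>
    rw [coeff_succ_X_mul, coeff_derivative]
    push_cast
    ring

end PowerSeries

section Subst2

variable {S : Type*} [SetLike S ℂ] [SubringClass S ℂ] {s : S}

theorem constantCoeff_subst2 (f : MvPowerSeries (Fin 2) ℂ) (z : ℂ⟦X⟧) :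
    constantCoeff (subst2 f z) = fcoeff f 0 0 := by
  rw [← coeff_zero_eq_constantCoeff_apply]
  simp [subst2]

theorem coeff_subst2_mem {f : MvPowerSeries (Fin 2) ℂ} (hf : ∀ i j, fcoeff f i j ∈ s)
    {z : ℂ⟦X⟧} {m : ℕ} (hz : z ∈ coeffsUpToIn s m) : coeff m (subst2 f z) ∈ s := by
  rw [subst2, coeff_mk]
  exact sum_mem fun i _ => sum_mem fun j _ => mul_mem (hf i j)
    (mul_mem (pow_mem (X_mem_coeffsUpToIn m) i) (pow_mem hz j) m le_rfl)

theorem coeff_subst2_sub_mem {f : MvPowerSeries (Fin 2) ℂ} (hf : ∀ i j, fcoeff f i j ∈ s)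
    {z : ℂ⟦X⟧} {n : ℕ} (hn : 1 ≤ n) (hz : constantCoeff z = 0)
    (hlow : ∀ k < n, coeff k z ∈ s) :
    coeff n (subst2 f z) - fcoeff f 0 1 * coeff n z ∈ s := by
  have h01 : (0, 1) ∈ range (n + 1) ×ˢ range (n + 1) := by simp; omega
  rw [subst2, coeff_mk, ← sum_product', ← add_sum_erase _ _ h01]
  simp only [pow_zero, one_mul, pow_one, add_sub_cancel_left]
  exact sum_mem fun x hx =>
    mul_mem (hf _ _) (coeff_X_pow_mul_pow_mem hz hlow (ne_of_mem_erase hx))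

end Subst2

theorem briot_bouquet_coefficients_in_subfield_general
    (L : Subfield ℂ) (f g : MvPowerSeries (Fin 2) ℂ)
    (hfL : ∀ i j : ℕ, fcoeff f i j ∈ L) (hgL : ∀ i j : ℕ, fcoeff g i j ∈ L)
    (hg : fcoeff g 0 0 ≠ 0)
    (hlambda : ∀ k : ℕ, 1 ≤ k → fcoeff f 0 1 / fcoeff g 0 0 ≠ (k : ℂ)) :
    ∀ z : PowerSeries ℂ, PowerSeries.constantCoeff z = 0 →
      subst2 g z * (PowerSeries.X * z.derivativeFun) = subst2 f z →
      ∀ i : ℕ, PowerSeries.coeff i z ∈ L := by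
  intro z hz heq n
  change subst2 g z * (X * d⁄dX ℂ z) = subst2 f z at heq
  induction n using Nat.strong_induction_on with | _ n ih =>
  rcases Nat.eq_zero_or_pos n with rfl | hn
  · rw [coeff_zero_eq_constantCoeff_apply, hz]
    exact zero_mem L
  have hrhs := coeff_subst2_sub_mem hfL hn hz ih
  have hlhs := coeff_mul_sub_constantCoeff_mul_mem (s := L) (n := n) (p := subst2 g z)
    (q := X * d⁄dX ℂ z) (by simp)
    (fun k hk => coeff_subst2_mem (m := k) hgL fun i hi => ih i (by omega))
    (fun k hk => by rw [coeff_X_mul_derivative]; exact mul_mem (natCast_mem L k) (ih k hk))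
  rw [constantCoeff_subst2, coeff_X_mul_derivative, heq] at hlhs
  have hc : (n : ℂ) * fcoeff g 0 0 - fcoeff f 0 1 ≠ 0 := fun h =>
    hlambda n hn (by rw [div_eq_iff hg]; linear_combination -h)
  have hmul : ((n : ℂ) * fcoeff g 0 0 - fcoeff f 0 1) * coeff n z ∈ L := by
    convert sub_mem hrhs hlhs using 1
    ring
  have hcL : (n : ℂ) * fcoeff g 0 0 - fcoeff f 0 1 ∈ L :=
    sub_mem (mul_mem (natCast_mem L n) (hgL 0 0)) (hfL 0 1)
  simpa [hc] using div_mem hmul hcL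

/-- Briot–Bouquet, rationality: if all coefficients of `f` and `g` lie in a
subfield `L ⊆ ℂ`, `g(0,0) ≠ 0`, `f(0,0) = 0` and `λ = f_{0,1}/g_{0,0}` is not
a positive integer, then all coefficients of the (unique) solution `z` with zero
constant term of `g(t, z(t)) · t · z'(t) = f(t, z(t))` lie in `L`. -/
theorem briot_bouquet_coefficients_in_subfield
    (L : Subfield ℂ) (f g : MvPowerSeries (Fin 2) ℂ)
    (hfL : ∀ i j : ℕ, fcoeff f i j ∈ L) (hgL : ∀ i j : ℕ, fcoeff g i j ∈ L)
    (hg : fcoeff g 0 0 ≠ 0) (hf : fcoeff f 0 0 = 0)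
    (hlambda : ∀ k : ℕ, 1 ≤ k → fcoeff f 0 1 / fcoeff g 0 0 ≠ (k : ℂ)) :
    ∀ z : PowerSeries ℂ, PowerSeries.constantCoeff z = 0 →
      subst2 g z * (PowerSeries.X * z.derivativeFun) = subst2 f z →
      ∀ i : ℕ, PowerSeries.coeff i z ∈ L :=
  briot_bouquet_coefficients_in_subfield_general L f g hfL hgL hg hlambda
end

section
/- Let ν ≥ 1 be an integer and let A, B ∈ ℂ[[u]] be convergent formal power series with ord(A) = ν − 1 and B(0) ≠ 0. Then every formal power series s ∈ ℂ[[t]] with ord(s) = 1 satisfying A(s(t))·s'(t) = t^{ν−1}·B(s(t)) is convergent. -/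
/-- Composition `A(s(t))` of formal power series (intended for `s` with zero
constant term, in which case `coeff n (s^k) = 0` for `k > n`). -/
noncomputable def pscomp (A s : PowerSeries ℂ) : PowerSeries ℂ :=
  PowerSeries.mk fun n => ∑ k ∈ Finset.range (n + 1),
    (PowerSeries.coeff k A) * PowerSeries.coeff n (s ^ k)

/-!
Dividing by `B(s)` gives `E(s) s' = t ^ (ν - 1)` with `E = A / B` of order `ν - 1`, so
`Φ(s) = t ^ ν / ν` for the antiderivative `Φ = u ^ ν G(u) / ν` of `E`, where `G(0) ≠ 0`. With
`H = G ^ (-1 / ν)`, built from the binomial series, `(s / (t H(s))) ^ ν = 1` forces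
`s = c t H(s)` for a constant `c`. The series `E`, `Φ`, `G`, `H` converge along with `A` and `B`,
and a solution of `s = t K(s)` with `K` convergent converges by a majorant argument: a bound
`|s_j| ≤ M ρ ^ j / j ^ 2` is stable under taking powers of `s`, so it propagates from the
coefficients of `s` of index at most `m` to the one of index `m + 1`.
-/

open PowerSeries Finset

theorem sum_range_inv_sq_le_two (n : ℕ) : ∑ i ∈ range n, ((i : ℝ) ^ 2)⁻¹ ≤ 2 := by
  rcases Nat.eq_zero_or_pos n with rfl | hn
  · norm_num
  rw [range_eq_Ico, sum_eq_sum_Ico_succ_bot hn, Ico_add_one_left_eq_Ioo]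
  simpa using sum_Ioo_inv_sq_le (α := ℝ) 0 n

section MajorantWeight

/-- Vanishes at `j = 0` since `x / 0 = 0`. The factor `1 / j ^ 2` makes the weights
submultiplicative up to the constant `8`, so coefficient bounds by them survive taking powers,
whereas a plain geometric bound loses a factor `n + 1` at each multiplication. -/
noncomputable def majorantWeight (ρ : ℝ) (j : ℕ) : ℝ := ρ ^ j / (j : ℝ) ^ 2

variable {ρ M : ℝ}

@[simp]
theorem majorantWeight_zero (ρ : ℝ) : majorantWeight ρ 0 = 0 := by simp [majorantWeight]

theorem majorantWeight_nonneg (hρ : 0 ≤ ρ) (j : ℕ) : 0 ≤ majorantWeight ρ j := by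
  unfold majorantWeight; positivity

theorem majorantWeight_le_pow (hρ : 0 ≤ ρ) (j : ℕ) : majorantWeight ρ j ≤ ρ ^ j := by
  rcases Nat.eq_zero_or_pos j with rfl | hj
  · simp
  · exact div_le_self (by positivity) (one_le_pow₀ (by exact_mod_cast hj))

theorem majorantWeight_mul_le (hρ : 0 ≤ ρ) (p q : ℕ) :
    majorantWeight ρ p * majorantWeight ρ q ≤
      2 * majorantWeight ρ (p + q) * (((p : ℝ) ^ 2)⁻¹ + ((q : ℝ) ^ 2)⁻¹) := by
  rcases Nat.eq_zero_or_pos p with rfl | hp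
  · simp only [majorantWeight_zero, zero_mul]
    have := majorantWeight_nonneg hρ (0 + q); positivity
  rcases Nat.eq_zero_or_pos q with rfl | hq
  · simp only [majorantWeight_zero, mul_zero]
    have := majorantWeight_nonneg hρ (p + 0); positivity
  have ha : (0 : ℝ) < p := by exact_mod_cast hp
  have hb : (0 : ℝ) < q := by exact_mod_cast hq
  simp only [majorantWeight, Nat.cast_add, pow_add]
  rw [div_mul_div_comm, div_le_iff₀ (by positivity)]
  field_simp
  nlinarith [sq_nonneg ((p : ℝ) - q), pow_nonneg hρ p, pow_nonneg hρ q,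
    mul_nonneg (pow_nonneg hρ p) (pow_nonneg hρ q)]

theorem sum_antidiagonal_majorantWeight_mul_le (hρ : 0 ≤ ρ) (n : ℕ) :
    ∑ p ∈ antidiagonal n, majorantWeight ρ p.1 * majorantWeight ρ p.2 ≤
      8 * majorantWeight ρ n := by
  have hsym : ∑ p ∈ antidiagonal n, (((p.2 : ℕ) : ℝ) ^ 2)⁻¹ =
      ∑ p ∈ antidiagonal n, (((p.1 : ℕ) : ℝ) ^ 2)⁻¹ :=
    Nat.sum_antidiagonal_swap (f := fun p : ℕ × ℕ => (((p.1 : ℕ) : ℝ) ^ 2)⁻¹)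
  have hrange : ∑ p ∈ antidiagonal n, (((p.1 : ℕ) : ℝ) ^ 2)⁻¹ ≤ 2 := by
    rw [Nat.sum_antidiagonal_eq_sum_range_succ_mk]
    exact sum_range_inv_sq_le_two (n + 1)
  calc ∑ p ∈ antidiagonal n, majorantWeight ρ p.1 * majorantWeight ρ p.2
      ≤ ∑ p ∈ antidiagonal n,
          2 * majorantWeight ρ n * (((p.1 : ℝ) ^ 2)⁻¹ + ((p.2 : ℝ) ^ 2)⁻¹) := by
        refine sum_le_sum fun p hp => ?_
        rw [← mem_antidiagonal.mp hp]
        exact majorantWeight_mul_le hρ p.1 p.2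
    _ ≤ 2 * majorantWeight ρ n * (2 + 2) := by
        rw [← mul_sum, sum_add_distrib, hsym]
        have := majorantWeight_nonneg hρ n
        gcongr
    _ = 8 * majorantWeight ρ n := by ring

theorem mul_majorantWeight_le_succ {C : ℝ} (hρ : 0 ≤ ρ) (hC : 0 ≤ C) (h : 4 * C ≤ M * ρ)
    {m : ℕ} (hm : m ≠ 0) : C * majorantWeight ρ m ≤ M * majorantWeight ρ (m + 1) := by
  have hm' : (1 : ℝ) ≤ m := by exact_mod_cast Nat.one_le_iff_ne_zero.mpr hm
  unfold majorantWeight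
  rw [mul_div_assoc', mul_div_assoc', div_le_div_iff₀ (by positivity) (by positivity)]
  push_cast
  calc C * ρ ^ m * ((m : ℝ) + 1) ^ 2 ≤ C * ρ ^ m * (4 * (m : ℝ) ^ 2) := by
        gcongr; nlinarith
    _ = 4 * C * (ρ ^ m * (m : ℝ) ^ 2) := by ring
    _ ≤ M * ρ * (ρ ^ m * (m : ℝ) ^ 2) := by gcongr
    _ = M * ρ ^ (m + 1) * (m : ℝ) ^ 2 := by ring

end MajorantWeight

namespace PowerSeries

section Substitution

variable {R : Type*} [CommRing R]

theorem subst_one {a : R⟦X⟧} (ha : HasSubst a) : (1 : R⟦X⟧).subst a = 1 := by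
  rw [← coe_substAlgHom (R := R) ha, map_one]

theorem coeff_pow_eq_zero_of_lt {f : R⟦X⟧} (hf : constantCoeff f = 0) {n k : ℕ} (h : n < k) :
    coeff n (f ^ k) = 0 :=
  X_pow_dvd_iff.mp (pow_dvd_pow_of_dvd (X_dvd_iff.mpr hf) k) n h

theorem coeff_subst_eq_sum_range {f g : R⟦X⟧} (hg : constantCoeff g = 0) (n : ℕ) :
    coeff n (f.subst g) = ∑ k ∈ range (n + 1), coeff k f * coeff n (g ^ k) := by
  rw [coeff_subst' (HasSubst.of_constantCoeff_zero' hg),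
    finsum_eq_sum_of_support_subset (s := range (n + 1))]
  · simp only [smul_eq_mul]
  · intro k hk
    by_contra hkn
    simp only [coe_range, Set.mem_Iio, not_lt] at hkn
    simp [coeff_pow_eq_zero_of_lt hg (Nat.lt_of_succ_le hkn)] at hk

theorem constantCoeff_subst_of_constantCoeff_eq_zero {f g : R⟦X⟧} (hg : constantCoeff g = 0) :
    constantCoeff (f.subst g) = constantCoeff f := by
  simpa using coeff_subst_eq_sum_range (f := f) hg 0

theorem coeff_subst_eq_coeff_subst_trunc {f g : R⟦X⟧} (hg : constantCoeff g = 0) (n : ℕ) :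
    coeff n (f.subst g) = coeff n (f.subst (trunc (n + 1) g : R⟦X⟧)) := by
  have hg' : constantCoeff (trunc (n + 1) g : R⟦X⟧) = 0 := by
    rw [← coeff_zero_eq_constantCoeff_apply, coeff_coe_trunc_of_lt n.succ_pos,
      coeff_zero_eq_constantCoeff_apply, hg]
  rw [coeff_subst_eq_sum_range hg, coeff_subst_eq_sum_range hg']
  refine sum_congr rfl fun k _ => ?_
  have := congrArg (Polynomial.coeff · n) (trunc_trunc_pow g (n + 1) k)
  simp only [coeff_trunc, Nat.lt_succ_self, if_true] at this
  rw [this]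

theorem subst_mul_derivative_eq_of_mul_eq_one {A B B' s P : R⟦X⟧} (hs : constantCoeff s = 0)
    (hB'B : B' * B = 1) (h : A.subst s * d⁄dX R s = P * B.subst s) :
    (A * B').subst s * d⁄dX R s = P := by
  have hsub := HasSubst.of_constantCoeff_zero' hs
  calc (A * B').subst s * d⁄dX R s = A.subst s * d⁄dX R s * B'.subst s := by
        rw [subst_mul hsub]; ring
    _ = P * (B' * B).subst s := by rw [h, subst_mul hsub]; ring
    _ = P := by rw [hB'B, subst_one hsub, mul_one]

end Substitution

section Field

variable {K : Type*} [Field K]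

-- The coefficient at `n = 0` is `coeff (0 - 1) f / 0 = 0`.
noncomputable def antideriv (f : K⟦X⟧) : K⟦X⟧ :=
  mk fun n => coeff (n - 1) f / n

theorem constantCoeff_antideriv (f : K⟦X⟧) : constantCoeff (antideriv f) = 0 := by
  rw [← coeff_zero_eq_constantCoeff_apply, antideriv, coeff_mk, Nat.cast_zero, div_zero]

theorem derivative_antideriv [CharZero K] (f : K⟦X⟧) : d⁄dX K (antideriv f) = f := by
  ext n
  rw [coeff_derivative, antideriv, coeff_mk, Nat.add_sub_cancel, Nat.cast_add_one,
    div_mul_cancel₀ _ (Nat.cast_add_one_ne_zero n)]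

theorem eq_C_of_pow_eq_one [CharZero K] {u : K⟦X⟧} {ν : ℕ} (hν : ν ≠ 0) (h : u ^ ν = 1) :
    u = C (constantCoeff u) := by
  have hu : u ≠ 0 := ne_zero_pow hν (h ▸ one_ne_zero)
  have hd : (ν : K⟦X⟧) * u ^ (ν - 1) * d⁄dX K u = 0 := by
    rw [← derivative_pow, h, derivative_one]
  have hν' : (ν : K⟦X⟧) ≠ 0 := by
    rw [← map_natCast (C (R := K))]
    exact (map_ne_zero_iff _ (C_injective)).mpr (Nat.cast_ne_zero.mpr hν)
  refine derivative.ext ?_ (constantCoeff_C _)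
  rw [derivative_C]
  simpa [hν', hu] using hd

theorem exists_eq_smul_of_pow_eq_pow [CharZero K] {u v : K⟦X⟧} {ν : ℕ} (hν : ν ≠ 0)
    (hv : constantCoeff v ≠ 0) (h : u ^ ν = v ^ ν) : ∃ c : K, u = c • v := by
  have hz : (u * v⁻¹) ^ ν = 1 := by
    rw [mul_pow, h, ← mul_pow, PowerSeries.mul_inv_cancel v hv, one_pow]
  refine ⟨constantCoeff (u * v⁻¹), ?_⟩
  rw [smul_eq_C_mul, ← eq_C_of_pow_eq_one hν hz, mul_assoc, PowerSeries.inv_mul_cancel v hv,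
    mul_one]

theorem subst_antideriv_eq [CharZero K] {E s : K⟦X⟧} {ν : ℕ} (hν : ν ≠ 0)
    (hs : constantCoeff s = 0) (h : E.subst s * d⁄dX K s = X ^ (ν - 1)) :
    (antideriv E).subst s = (ν : K)⁻¹ • X ^ ν := by
  refine derivative.ext ?_ ?_
  · rw [derivative_subst (HasSubst.of_constantCoeff_zero' hs), derivative_antideriv, h,
      Derivation.map_smul, derivative_pow, derivative_X, mul_one, smul_eq_C_mul, ← mul_assoc,
      ← map_natCast (C (R := K)), ← map_mul, inv_mul_cancel₀ (Nat.cast_ne_zero.mpr hν), map_one,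
      one_mul]
  · rw [constantCoeff_subst_of_constantCoeff_eq_zero hs, constantCoeff_antideriv,
      smul_eq_C_mul, map_mul, map_pow, constantCoeff_X, zero_pow hν, mul_zero]

theorem exists_antideriv_eq_X_pow_mul [CharZero K] {E : K⟦X⟧} {ν : ℕ} (hν : ν ≠ 0)
    (hE : E.order = (ν - 1 : ℕ)) : ∃ Γ, antideriv E = X ^ ν * Γ ∧ constantCoeff Γ ≠ 0 := by
  obtain ⟨hEν, hE_lt⟩ := order_eq_nat.mp hE
  obtain ⟨Γ, hΓ⟩ : X ^ ν ∣ antideriv E := by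
    refine X_pow_dvd_iff.mpr fun m hm => ?_
    rcases Nat.eq_zero_or_pos m with rfl | hm0
    · simp [antideriv]
    · rw [antideriv, coeff_mk, hE_lt _ (by omega), zero_div]
  refine ⟨Γ, hΓ, fun hΓ0 => ?_⟩
  have := congrArg (coeff ν) hΓ
  rw [coeff_X_pow_mul', if_pos le_rfl, Nat.sub_self, coeff_zero_eq_constantCoeff_apply, hΓ0,
    antideriv, coeff_mk, div_eq_zero_iff] at this
  exact this.elim hEν (Nat.cast_ne_zero.mpr hν)

theorem pow_mul_subst_eq_X_pow [CharZero K] {E s Γ : K⟦X⟧} {ν : ℕ} (hν : ν ≠ 0)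
    (hs : constantCoeff s = 0) (h : E.subst s * d⁄dX K s = X ^ (ν - 1))
    (hΓ : antideriv E = X ^ ν * Γ) : s ^ ν * ((ν : K) • Γ).subst s = X ^ ν := by
  have hsub := HasSubst.of_constantCoeff_zero' hs
  calc s ^ ν * ((ν : K) • Γ).subst s = (ν : K) • (X ^ ν * Γ).subst s := by
        rw [subst_smul hsub, subst_mul hsub, subst_pow hsub, subst_X hsub, mul_smul_comm]
    _ = X ^ ν := by
        rw [← hΓ, subst_antideriv_eq hν hs h, smul_smul,
          mul_inv_cancel₀ (Nat.cast_ne_zero.mpr hν), one_smul]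

theorem exists_eq_X_mul_subst [CharZero K] {s G H : K⟦X⟧} {ν : ℕ} (hν : ν ≠ 0)
    (hs : constantCoeff s = 0) (hsG : s ^ ν * G.subst s = X ^ ν) (hHG : H ^ ν * G = 1) :
    ∃ c : K, s = X * (c • H).subst s := by
  have hsub := HasSubst.of_constantCoeff_zero' hs
  have hH0 : constantCoeff (H.subst s) ≠ 0 := by
    rw [constantCoeff_subst_of_constantCoeff_eq_zero hs]
    refine fun h0 => zero_ne_one (?_ : (0 : K) = 1)
    simpa [h0, zero_pow hν] using congrArg constantCoeff hHG
  have hHGs : (H.subst s) ^ ν * G.subst s = 1 := by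
    rw [← subst_pow hsub, ← subst_mul hsub, hHG, subst_one hsub]
  obtain ⟨u, rfl⟩ := X_dvd_iff.mpr hs
  have hpow : u ^ ν = (H.subst (X * u)) ^ ν := by
    refine mul_left_cancel₀ (pow_ne_zero ν X_ne_zero) ?_
    calc X ^ ν * u ^ ν = (X * u) ^ ν * ((H.subst (X * u)) ^ ν * G.subst (X * u)) := by
          rw [hHGs, mul_one, mul_pow]
      _ = X ^ ν * (H.subst (X * u)) ^ ν := by rw [← hsG]; ring
  obtain ⟨c, hc⟩ := exists_eq_smul_of_pow_eq_pow hν hH0 hpow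
  exact ⟨c, by rw [subst_smul hsub, ← hc]⟩

end Field

section GeomBounded

variable {𝕜 : Type*} [NormedField 𝕜]

def IsGeomBounded (f : 𝕜⟦X⟧) : Prop :=
  ∃ C R : ℝ, 0 ≤ C ∧ 0 < R ∧ ∀ n, ‖coeff n f‖ ≤ C * R ^ n

namespace IsGeomBounded

variable {f g : 𝕜⟦X⟧}

theorem of_summable {r : ℝ} (hr : 0 < r) (h : Summable fun i : ℕ => ‖coeff i f‖ * r ^ i) :
    IsGeomBounded f := by
  refine ⟨∑' i, ‖coeff i f‖ * r ^ i, r⁻¹, tsum_nonneg fun i => by positivity, inv_pos.mpr hr,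
    fun n => ?_⟩
  calc ‖coeff n f‖ = ‖coeff n f‖ * r ^ n * r⁻¹ ^ n := by
        rw [mul_assoc, ← mul_pow, mul_inv_cancel₀ hr.ne', one_pow, mul_one]
    _ ≤ (∑' i, ‖coeff i f‖ * r ^ i) * r⁻¹ ^ n :=
      mul_le_mul_of_nonneg_right (h.le_tsum n fun i _ => by positivity) (by positivity)

theorem exists_summable (h : IsGeomBounded f) :
    ∃ r : ℝ, 0 < r ∧ Summable fun i : ℕ => ‖coeff i f‖ * r ^ i := by
  obtain ⟨C, R, hC, hR, h⟩ := h
  refine ⟨(2 * R)⁻¹, by positivity, ?_⟩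
  refine Summable.of_nonneg_of_le (fun i => by positivity) (fun i => ?_)
    ((summable_geometric_two).mul_left C)
  calc ‖coeff i f‖ * (2 * R)⁻¹ ^ i ≤ C * R ^ i * (2 * R)⁻¹ ^ i :=
        mul_le_mul_of_nonneg_right (h i) (by positivity)
    _ = C * (1 / 2) ^ i := by rw [mul_assoc, ← mul_pow]; field_simp

theorem of_norm_coeff_le (hf : IsGeomBounded f) (h : ∀ n, ‖coeff n g‖ ≤ ‖coeff n f‖) :
    IsGeomBounded g := by
  obtain ⟨C, R, hC, hR, hf⟩ := hf
  exact ⟨C, R, hC, hR, fun n => (h n).trans (hf n)⟩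

theorem smul (hf : IsGeomBounded f) (c : 𝕜) : IsGeomBounded (c • f) := by
  obtain ⟨C, R, hC, hR, hf⟩ := hf
  refine ⟨‖c‖ * C, R, by positivity, hR, fun n => ?_⟩
  rw [coeff_smul, smul_eq_mul, norm_mul, mul_assoc]
  exact mul_le_mul_of_nonneg_left (hf n) (norm_nonneg c)

theorem of_X_pow_mul {ν : ℕ} (h : IsGeomBounded (X ^ ν * f)) : IsGeomBounded f := by
  obtain ⟨C, R, hC, hR, h⟩ := h
  refine ⟨C * R ^ ν, R, by positivity, hR, fun n => ?_⟩
  simpa [coeff_X_pow_mul, pow_add, mul_assoc, mul_comm (R ^ n)] using h (n + ν)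

theorem mul (hf : IsGeomBounded f) (hg : IsGeomBounded g) : IsGeomBounded (f * g) := by
  obtain ⟨C₁, R₁, hC₁, hR₁, hf⟩ := hf
  obtain ⟨C₂, R₂, hC₂, hR₂, hg⟩ := hg
  set R := max R₁ R₂
  have hR : 0 < R := lt_max_of_lt_left hR₁
  refine ⟨C₁ * C₂, 2 * R, by positivity, by positivity, fun n => ?_⟩
  have hterm : ∀ p ∈ antidiagonal n, ‖coeff p.1 f * coeff p.2 g‖ ≤ C₁ * C₂ * R ^ n := by
    intro p hp
    rw [← mem_antidiagonal.mp hp, pow_add, norm_mul, mul_mul_mul_comm]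
    exact mul_le_mul ((hf _).trans (by gcongr; exact le_max_left _ _))
      ((hg _).trans (by gcongr; exact le_max_right _ _)) (norm_nonneg _) (by positivity)
  calc ‖coeff n (f * g)‖ ≤ ∑ p ∈ antidiagonal n, ‖coeff p.1 f * coeff p.2 g‖ := by
        rw [coeff_mul]; exact norm_sum_le _ _
    _ ≤ (n + 1) * (C₁ * C₂ * R ^ n) := by
        simpa using sum_le_card_nsmul _ _ _ hterm
    _ ≤ 2 ^ n * (C₁ * C₂ * R ^ n) := by
        gcongr; exact_mod_cast Nat.lt_two_pow_self
    _ = C₁ * C₂ * (2 * R) ^ n := by ring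

end IsGeomBounded

end GeomBounded

section WeightedBounds

variable {𝕜 : Type*} [NormedField 𝕜] {ρ M : ℝ}

theorem norm_coeff_pow_le_majorantWeight {g : 𝕜⟦X⟧} (hρ : 0 ≤ ρ) (hM : 0 ≤ M)
    (hg : ∀ j, ‖coeff j g‖ ≤ M * majorantWeight ρ j) {k : ℕ} (hk : k ≠ 0) (n : ℕ) :
    ‖coeff n (g ^ k)‖ ≤ (8 * M) ^ k * majorantWeight ρ n := by
  induction k, Nat.one_le_iff_ne_zero.mpr hk using Nat.le_induction generalizing n with
  | base =>
    have := majorantWeight_nonneg hρ n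
    rw [pow_one, pow_one]
    exact (hg n).trans (by nlinarith)
  | succ k _ ih =>
    calc ‖coeff n (g ^ (k + 1))‖ ≤ ∑ p ∈ antidiagonal n, ‖coeff p.1 (g ^ k) * coeff p.2 g‖ := by
          rw [pow_succ, coeff_mul]; exact norm_sum_le _ _
      _ ≤ ∑ p ∈ antidiagonal n,
            (8 * M) ^ k * M * (majorantWeight ρ p.1 * majorantWeight ρ p.2) := by
          refine sum_le_sum fun p _ => ?_
          have := majorantWeight_nonneg hρ p.1
          rw [norm_mul, mul_mul_mul_comm]
          exact mul_le_mul (ih (by omega) _) (hg _) (norm_nonneg _) (by positivity)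
      _ ≤ (8 * M) ^ k * M * (8 * majorantWeight ρ n) := by
          rw [← mul_sum]
          gcongr
          exact sum_antidiagonal_majorantWeight_mul_le hρ n
      _ = (8 * M) ^ (k + 1) * majorantWeight ρ n := by ring

theorem norm_coeff_subst_le_majorantWeight {f g : 𝕜⟦X⟧} {C R : ℝ} (hρ : 0 ≤ ρ) (hM : 0 ≤ M)
    (hC : 0 ≤ C) (hR : 0 ≤ R) (hMR : 16 * M * R ≤ 1) (hf : ∀ k, ‖coeff k f‖ ≤ C * R ^ k)
    (hg : ∀ j, ‖coeff j g‖ ≤ M * majorantWeight ρ j) {n : ℕ} (hn : n ≠ 0) :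
    ‖coeff n (f.subst g)‖ ≤ C * majorantWeight ρ n := by
  have hg0 : constantCoeff g = 0 := by
    simpa [coeff_zero_eq_constantCoeff_apply] using hg 0
  have hw := majorantWeight_nonneg hρ n
  have hgeom : ∑ k ∈ range n, (1 / 2 : ℝ) ^ (k + 1) ≤ 1 := by
    simp_rw [pow_succ, ← sum_mul]
    linarith [sum_geometric_two_le n]
  rw [coeff_subst_eq_sum_range hg0, sum_range_succ', pow_zero, coeff_one, if_neg hn, mul_zero,
    add_zero]
  calc ‖∑ k ∈ range n, coeff (k + 1) f * coeff n (g ^ (k + 1))‖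
      ≤ ∑ k ∈ range n, ‖coeff (k + 1) f * coeff n (g ^ (k + 1))‖ := norm_sum_le _ _
    _ ≤ ∑ k ∈ range n, C * majorantWeight ρ n * (1 / 2) ^ (k + 1) := by
        refine sum_le_sum fun k _ => ?_
        rw [norm_mul]
        calc ‖coeff (k + 1) f‖ * ‖coeff n (g ^ (k + 1))‖
            ≤ C * R ^ (k + 1) * ((8 * M) ^ (k + 1) * majorantWeight ρ n) :=
              mul_le_mul (hf _) (norm_coeff_pow_le_majorantWeight hρ hM hg k.succ_ne_zero n)
                (norm_nonneg _) (by positivity)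
          _ = C * majorantWeight ρ n * (8 * M * R) ^ (k + 1) := by ring
          _ ≤ C * majorantWeight ρ n * (1 / 2) ^ (k + 1) := by
              gcongr
              linarith
    _ ≤ C * majorantWeight ρ n := by
        rw [← mul_sum]
        exact mul_le_of_le_one_right (by positivity) hgeom

theorem exists_norm_coeff_le_majorantWeight {g : 𝕜⟦X⟧} (hg : IsGeomBounded g)
    (hg0 : constantCoeff g = 0) (hM : 0 < M) :
    ∃ ρ, 0 < ρ ∧ ∀ j, ‖coeff j g‖ ≤ M * majorantWeight ρ j := by
  obtain ⟨C, R, hC, hR, hg⟩ := hg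
  set m := max 1 (C / M)
  have hm : 1 ≤ m := le_max_left _ _
  have hCm : C ≤ M * m := by
    rw [← div_le_iff₀' hM]; exact le_max_right _ _
  refine ⟨4 * R * m, by positivity, fun j => ?_⟩
  rcases Nat.eq_zero_or_pos j with rfl | hj
  · simp [coeff_zero_eq_constantCoeff_apply, hg0]
  have hj4 : (j : ℝ) ^ 2 ≤ 4 ^ j := by
    have : (j : ℝ) ≤ 2 ^ j := by exact_mod_cast Nat.lt_two_pow_self.le
    calc (j : ℝ) ^ 2 ≤ (2 ^ j) ^ 2 := by gcongr
      _ = 4 ^ j := by rw [← pow_mul, mul_comm, pow_mul]; norm_num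
  unfold majorantWeight
  rw [mul_div_assoc', le_div_iff₀ (by positivity)]
  calc ‖coeff j g‖ * (j : ℝ) ^ 2 ≤ C * R ^ j * 4 ^ j := by gcongr; exact hg j
    _ ≤ M * m ^ j * R ^ j * 4 ^ j := by
        gcongr
        exact hCm.trans (mul_le_mul_of_nonneg_left (le_self_pow₀ hm hj.ne') hM.le)
    _ = M * (4 * R * m) ^ j := by ring

namespace IsGeomBounded

theorem of_majorantWeight {g : 𝕜⟦X⟧} (hρ : 0 < ρ) (hM : 0 ≤ M)
    (hg : ∀ j, ‖coeff j g‖ ≤ M * majorantWeight ρ j) : IsGeomBounded g :=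
  ⟨M, ρ, hM, hρ, fun j => (hg j).trans (by gcongr; exact majorantWeight_le_pow hρ.le j)⟩

theorem subst {f g : 𝕜⟦X⟧} (hf : IsGeomBounded f) (hg : IsGeomBounded g)
    (hg0 : constantCoeff g = 0) : IsGeomBounded (f.subst g) := by
  obtain ⟨C, R, hC, hR, hf⟩ := hf
  obtain ⟨ρ, hρ, hgρ⟩ := exists_norm_coeff_le_majorantWeight hg hg0 (M := (16 * R)⁻¹)
    (by positivity)
  refine ⟨C, ρ, hC, hρ, fun n => ?_⟩
  rcases eq_or_ne n 0 with rfl | hn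
  · simpa [constantCoeff_subst_of_constantCoeff_eq_zero hg0] using hf 0
  · refine (norm_coeff_subst_le_majorantWeight hρ.le (by positivity) hC hR.le ?_ hf hgρ hn).trans
      (by gcongr; exact majorantWeight_le_pow hρ.le n)
    exact le_of_eq (by field_simp)

theorem of_eq_X_mul_subst {s K : 𝕜⟦X⟧} (hK : IsGeomBounded K) (hs : s = X * K.subst s) :
    IsGeomBounded s := by
  obtain ⟨C, R, hC, hR, hK⟩ := hK
  set M := (16 * R)⁻¹
  have hM : 0 < M := by positivity
  set ρ := (4 * C + ‖coeff 1 s‖) / M + 1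
  have hMρ : 4 * C + ‖coeff 1 s‖ ≤ M * ρ := by
    rw [mul_add, mul_div_cancel₀ _ hM.ne']; linarith
  have hρ : 0 < ρ := by positivity
  have hs0 : constantCoeff s = 0 := by
    rw [hs, map_mul, constantCoeff_X, zero_mul]
  refine of_majorantWeight hρ hM.le fun m => ?_
  induction m using Nat.strong_induction_on with | _ m ih =>
  rcases m with _ | _ | m
  · simp [coeff_zero_eq_constantCoeff_apply, hs0]
  · simp only [majorantWeight, zero_add, pow_one, Nat.cast_one, one_pow, div_one]
    linarith [norm_nonneg (coeff 1 s)]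
  · set P : 𝕜⟦X⟧ := ↑(trunc (m + 2) s)
    have hP : ∀ j, ‖coeff j P‖ ≤ M * majorantWeight ρ j := by
      intro j
      rw [Polynomial.coeff_coe, coeff_trunc]
      split_ifs with hj
      · exact ih j hj
      · have := majorantWeight_nonneg hρ.le j
        rw [norm_zero]; positivity
    have hcoeff : coeff (m + 2) s = coeff (m + 1) (K.subst P) := by
      conv_lhs => rw [hs]
      rw [coeff_succ_X_mul, coeff_subst_eq_coeff_subst_trunc hs0]
    rw [hcoeff]
    refine (norm_coeff_subst_le_majorantWeight hρ.le hM.le hC hR.le ?_ hK hP m.succ_ne_zero).trans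
      (mul_majorantWeight_le_succ hρ.le hC (by linarith [norm_nonneg (coeff 1 s)]) m.succ_ne_zero)
    exact le_of_eq (by simp only [M]; field_simp)

end IsGeomBounded

end WeightedBounds

theorem binomialSeries_pow {R A : Type*} [CommRing R] [BinomialRing R] [Ring A] [Algebra R A]
    (r : R) (n : ℕ) : binomialSeries A r ^ n = binomialSeries A (n * r) := by
  induction n with
  | zero => simp
  | succ n ih => rw [pow_succ, ih, ← binomialSeries_add, Nat.cast_succ, add_one_mul]

section Binomial

variable {𝕜 : Type*} [RCLike 𝕜]

theorem IsGeomBounded.antideriv {f : 𝕜⟦X⟧} (hf : IsGeomBounded f) :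
    IsGeomBounded (antideriv f) := by
  obtain ⟨C, R, hC, hR, hf⟩ := hf
  refine ⟨C / R, R, by positivity, hR, fun n => ?_⟩
  rcases Nat.eq_zero_or_pos n with rfl | hn
  · simp [PowerSeries.antideriv]; positivity
  rw [PowerSeries.antideriv, coeff_mk, norm_div, RCLike.norm_natCast]
  calc ‖coeff (n - 1) f‖ / n ≤ ‖coeff (n - 1) f‖ :=
        div_le_self (norm_nonneg _) (by exact_mod_cast hn)
    _ ≤ C * R ^ (n - 1) := hf _
    _ = C / R * R ^ n := by
        rw [div_mul_eq_mul_div, eq_div_iff hR.ne', mul_assoc, ← pow_succ,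
          Nat.sub_add_cancel hn]

theorem norm_coeff_binomialSeries_le_one {a : 𝕜} (ha : ‖a‖ ≤ 1) (n : ℕ) :
    ‖coeff n (binomialSeries 𝕜 a)‖ ≤ 1 := by
  have hprod : (descPochhammer ℤ n).smeval a = ∏ j ∈ range n, (a - j) := by
    induction n with
    | zero => simp
    | succ n ih =>
      simp [descPochhammer_succ_right, Polynomial.smeval_mul, ih, prod_range_succ,
        Polynomial.smeval_natCast]
  rw [binomialSeries_coeff, smul_eq_mul, mul_one, Ring.choose_eq_smul, hprod, smul_eq_mul,
    norm_mul, norm_inv, RCLike.norm_natCast, norm_prod,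
    inv_mul_le_iff₀ (by exact_mod_cast n.factorial_pos), mul_one,
    ← prod_range_add_one_eq_factorial, Nat.cast_prod]
  refine prod_le_prod (fun _ _ => norm_nonneg _) fun j _ => ?_
  calc ‖a - j‖ ≤ ‖a‖ + ‖(j : 𝕜)‖ := norm_sub_le _ _
    _ ≤ ((j + 1 : ℕ) : ℝ) := by rw [RCLike.norm_natCast]; push_cast; linarith

theorem isGeomBounded_binomialSeries {a : 𝕜} (ha : ‖a‖ ≤ 1) :
    IsGeomBounded (binomialSeries 𝕜 a) :=
  ⟨1, 1, zero_le_one, one_pos, fun n => by simpa using norm_coeff_binomialSeries_le_one ha n⟩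

end Binomial

/-- `H = G ^ (-1 / ν)`, obtained by substituting `G / G(0) - 1` into the binomial series. -/
theorem IsGeomBounded.exists_pow_mul_eq_one {G : ℂ⟦X⟧} (hG : IsGeomBounded G)
    (hG0 : constantCoeff G ≠ 0) {ν : ℕ} (hν : ν ≠ 0) :
    ∃ H, IsGeomBounded H ∧ H ^ ν * G = 1 := by
  set g₀ := constantCoeff G
  obtain ⟨η, hη⟩ := IsAlgClosed.exists_pow_nat_eq g₀⁻¹ (Nat.pos_of_ne_zero hν)
  set w := g₀⁻¹ • G - 1
  have hw0 : constantCoeff w = 0 := by simp [w, g₀, hG0]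
  have hsub := HasSubst.of_constantCoeff_zero' hw0
  have hGw : G = g₀ • (binomialSeries ℂ (1 : ℂ)).subst w := by
    rw [← Nat.cast_one, binomialSeries_nat, pow_one, subst_add hsub, subst_X hsub,
      subst_one hsub, add_sub_cancel, smul_smul, mul_inv_cancel₀ hG0, one_smul]
  have hw : IsGeomBounded w := by
    refine (hG.smul g₀⁻¹).of_norm_coeff_le fun n => ?_
    rcases eq_or_ne n 0 with rfl | hn
    · rw [coeff_zero_eq_constantCoeff_apply, hw0, norm_zero]; exact norm_nonneg _
    · simp [w, coeff_one, hn]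
  refine ⟨η • (binomialSeries ℂ (-(ν : ℂ)⁻¹)).subst w,
    ((isGeomBounded_binomialSeries (by simpa using inv_le_one_of_one_le₀ (Nat.one_le_cast.mpr
      (Nat.pos_of_ne_zero hν)))).subst hw hw0).smul η, ?_⟩
  rw [smul_pow, hη, hGw, smul_mul_smul_comm, inv_mul_cancel₀ hG0, one_smul, ← subst_pow hsub,
    ← subst_mul hsub, binomialSeries_pow, ← binomialSeries_add,
    mul_neg, mul_inv_cancel₀ (Nat.cast_ne_zero.mpr hν), neg_add_cancel, binomialSeries_zero,
    subst_one hsub]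

end PowerSeries

theorem pscomp_eq_subst (A : ℂ⟦X⟧) {s : ℂ⟦X⟧} (hs : constantCoeff s = 0) :
    pscomp A s = A.subst s := by
  ext n
  rw [coeff_subst_eq_sum_range hs, pscomp, coeff_mk]

/-- If `A` and `B` are convergent power series with `ord A = ν - 1` and `B(0) ≠ 0`,
then every order-one formal power series solution `s` of
`A(s(t)) s'(t) = t^{ν-1} B(s(t))` is convergent. -/
theorem assoc_equation_solutions_convergent
    (ν : ℕ) (hν : 1 ≤ ν) (A B : PowerSeries ℂ)
    (hA : A.order = ((ν - 1 : ℕ)))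
    (hB : PowerSeries.constantCoeff B ≠ 0)
    (hAconv : ∃ r : ℝ, 0 < r ∧ Summable fun i : ℕ => ‖PowerSeries.coeff i A‖ * r ^ i)
    (hBconv : ∃ r : ℝ, 0 < r ∧ Summable fun i : ℕ => ‖PowerSeries.coeff i B‖ * r ^ i) :
    ∀ s : PowerSeries ℂ, s.order = 1 →
      pscomp A s * s.derivativeFun = PowerSeries.X ^ (ν - 1) * pscomp B s →
      ∃ r : ℝ, 0 < r ∧ Summable fun i : ℕ => ‖PowerSeries.coeff i s‖ * r ^ i := by
  intro s hord heq
  have hν0 : ν ≠ 0 := by omega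
  have hs : constantCoeff s = 0 := by
    simpa using coeff_of_lt_order (φ := s) 0 (by rw [hord]; exact zero_lt_one)
  obtain ⟨rA, hrA, hAsum⟩ := hAconv
  obtain ⟨rB, hrB, hBsum⟩ := hBconv
  obtain ⟨B', hB', hB'B⟩ :=
    (IsGeomBounded.of_summable hrB hBsum).exists_pow_mul_eq_one hB one_ne_zero
  rw [pow_one] at hB'B
  rw [pscomp_eq_subst A hs, pscomp_eq_subst B hs] at heq
  have hE := subst_mul_derivative_eq_of_mul_eq_one hs hB'B heq
  have hEord : (A * B').order = (ν - 1 : ℕ) := by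
    rw [order_mul, hA, order_zero_of_unit (IsUnit.of_mul_eq_one _ hB'B), add_zero]
  obtain ⟨Γ, hΓ, hΓ0⟩ := exists_antideriv_eq_X_pow_mul hν0 hEord
  have hG : IsGeomBounded ((ν : ℂ) • Γ) :=
    ((hΓ ▸ ((IsGeomBounded.of_summable hrA hAsum).mul hB').antideriv).of_X_pow_mul).smul _
  obtain ⟨H, hH, hHG⟩ := hG.exists_pow_mul_eq_one (by simpa [hν0] using hΓ0) hν0
  obtain ⟨c, hc⟩ := exists_eq_X_mul_subst hν0 hs (pow_mul_subst_eq_X_pow hν0 hs hE hΓ) hHG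
  exact ((hH.smul c).of_eq_X_mul_subst hc).exists_summable
end

section
/- Let ν ≥ 1 be an integer and let A, B ∈ ℂ[[u]] be formal power series with A(0) ≠ 0 and ord(B) = ν + 1. Consider formal power series s ∈ ℂ[[t]] with ord(s) = 1 satisfying t^{ν+1}·A(s(t))·s'(t) = B(s(t)). Then: (i) every such s satisfies (coeff_1(s))^ν = A(0)/coeff_{ν+1}(B); (ii) if s1, s2 are two such solutions with coeff_i(s1) = coeff_i(s2) for all 1 ≤ i ≤ ν + 1, then s1 = s2; (iii) if A and B are convergent, then every such solution s is convergent. -/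
open PowerSeries Finset Filter

section PowerDifferences

variable {R : Type*} [CommRing R] {g h : R⟦X⟧}

theorem coeff_add_mul_of_X_pow_dvd {i j : ℕ} {u w : R⟦X⟧} (hu : X ^ i ∣ u) (hw : X ^ j ∣ w) :
    coeff (i + j) (u * w) = coeff i u * coeff j w := by
  obtain ⟨u, rfl⟩ := hu
  obtain ⟨w, rfl⟩ := hw
  have hcoeff : ∀ (n : ℕ) (v : R⟦X⟧), coeff n (X ^ n * v) = constantCoeff v := fun n v => by
    simpa using coeff_X_pow_mul v n 0
  rw [mul_mul_mul_comm, ← pow_add, hcoeff, hcoeff, hcoeff, map_mul]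

theorem coeff_pow_self (hg : constantCoeff g = 0) (k : ℕ) : coeff k (g ^ k) = coeff 1 g ^ k := by
  obtain ⟨u, rfl⟩ := X_dvd_iff.mpr hg
  simpa [mul_pow] using coeff_X_pow_mul (u ^ k) k 0

theorem X_pow_dvd_pow (hg : constantCoeff g = 0) (k : ℕ) : X ^ k ∣ g ^ k :=
  pow_dvd_pow_of_dvd (X_dvd_iff.mpr hg) k

theorem X_pow_dvd_geom_sum₂ (hg : constantCoeff g = 0) (hh : constantCoeff h = 0) (n : ℕ) :
    X ^ (n - 1) ∣ ∑ i ∈ range n, g ^ i * h ^ (n - 1 - i) := by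
  refine dvd_sum fun i hi => ?_
  rw [show (X : R⟦X⟧) ^ (n - 1) = X ^ i * X ^ (n - 1 - i) by rw [← pow_add]; congr 1; grind]
  exact mul_dvd_mul (X_pow_dvd_pow hg i) (X_pow_dvd_pow hh _)

theorem coeff_geom_sum₂ (hg : constantCoeff g = 0) (hh : constantCoeff h = 0)
    (h1 : coeff 1 g = coeff 1 h) (n : ℕ) :
    coeff (n - 1) (∑ i ∈ range n, g ^ i * h ^ (n - 1 - i)) = n * coeff 1 g ^ (n - 1) := by
  rw [map_sum, sum_congr rfl (g := fun _ => coeff 1 g ^ (n - 1)), sum_const, card_range,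
    nsmul_eq_mul]
  intro i hi
  have hi : i + (n - 1 - i) = n - 1 := by grind
  have hprod := coeff_add_mul_of_X_pow_dvd (X_pow_dvd_pow hg i) (X_pow_dvd_pow hh (n - 1 - i))
  rw [hi] at hprod
  rw [hprod, coeff_pow_self hg, coeff_pow_self hh, ← h1, ← pow_add, hi]

variable {m : ℕ}

theorem X_pow_succ_dvd_sub (hgh : ∀ i ≤ m, coeff i g = coeff i h) : X ^ (m + 1) ∣ g - h :=
  X_pow_dvd_iff.mpr fun i hi => by rw [map_sub, hgh i (by omega), sub_self]

theorem X_pow_dvd_pow_sub_pow (hg : constantCoeff g = 0) (hh : constantCoeff h = 0)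
    (hgh : ∀ i ≤ m, coeff i g = coeff i h) (k : ℕ) : X ^ (m + k) ∣ g ^ k - h ^ k := by
  rcases k.eq_zero_or_pos with rfl | hk
  · simp
  rw [← geom_sum₂_mul, show m + k = (k - 1) + (m + 1) by omega, pow_add]
  exact mul_dvd_mul (X_pow_dvd_geom_sum₂ hg hh k) (X_pow_succ_dvd_sub hgh)

theorem coeff_pow_eq_of_lt (hg : constantCoeff g = 0) (hh : constantCoeff h = 0)
    (hgh : ∀ i ≤ m, coeff i g = coeff i h) {k N : ℕ} (hN : N < m + k) :
    coeff N (g ^ k) = coeff N (h ^ k) :=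
  sub_eq_zero.mp <| by
    rw [← map_sub]; exact X_pow_dvd_iff.mp (X_pow_dvd_pow_sub_pow hg hh hgh k) N hN

theorem coeff_pow_sub_coeff_pow (hm : 1 ≤ m) (hg : constantCoeff g = 0)
    (hh : constantCoeff h = 0) (hgh : ∀ i ≤ m, coeff i g = coeff i h) (k : ℕ) :
    coeff (m + k) (g ^ k) - coeff (m + k) (h ^ k) =
      k * coeff 1 g ^ (k - 1) * (coeff (m + 1) g - coeff (m + 1) h) := by
  rcases k.eq_zero_or_pos with rfl | hk
  · simp
  rw [← map_sub, ← geom_sum₂_mul, show m + k = (k - 1) + (m + 1) by omega,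
    coeff_add_mul_of_X_pow_dvd (X_pow_dvd_geom_sum₂ hg hh k) (X_pow_succ_dvd_sub hgh),
    coeff_geom_sum₂ hg hh (hgh 1 hm) k, map_sub]

end PowerDifferences

section Composition

variable {A B f g : ℂ⟦X⟧} {m : ℕ}

theorem coeff_pscomp (A s : ℂ⟦X⟧) (n : ℕ) :
    coeff n (pscomp A s) = ∑ k ∈ range (n + 1), coeff k A * coeff n (s ^ k) :=
  coeff_mk _ _

theorem coeff_zero_pscomp (A s : ℂ⟦X⟧) : coeff 0 (pscomp A s) = constantCoeff A := by
  simp [coeff_pscomp]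

theorem coeff_pscomp_eq_of_coeff_eq (hf : constantCoeff f = 0) (hg : constantCoeff g = 0)
    (hfg : ∀ i ≤ m, coeff i f = coeff i g) (A : ℂ⟦X⟧) {j : ℕ} (hj : j ≤ m) :
    coeff j (pscomp A f) = coeff j (pscomp A g) := by
  rw [coeff_pscomp, coeff_pscomp]
  refine sum_congr rfl fun k _ => ?_
  rcases k.eq_zero_or_pos with rfl | hk
  · rfl
  · rw [coeff_pow_eq_of_lt hf hg hfg (by omega)]

theorem coeff_pscomp_sub_coeff_pscomp {ν : ℕ} (hm : 1 ≤ m) (hB : ∀ k ≤ ν, coeff k B = 0)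
    (hf : constantCoeff f = 0) (hg : constantCoeff g = 0) (hfg : ∀ i ≤ m, coeff i f = coeff i g) :
    coeff (m + (ν + 1)) (pscomp B f) - coeff (m + (ν + 1)) (pscomp B g) =
      (ν + 1) * coeff (ν + 1) B * coeff 1 f ^ ν * (coeff (m + 1) f - coeff (m + 1) g) := by
  rw [coeff_pscomp, coeff_pscomp, ← sum_sub_distrib, sum_eq_single (ν + 1)]
  · rw [← mul_sub, coeff_pow_sub_coeff_pow hm hf hg hfg]
    push_cast
    ring
  · intro k _ hk
    rcases le_or_gt k ν with hkν | hkν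
    · simp [hB k hkν]
    · rw [coeff_pow_eq_of_lt hf hg hfg (by omega), sub_self]
  · intro h
    exact absurd (mem_range.mpr (by omega)) h

theorem coeff_pscomp_mul_derivative_sub (hf : constantCoeff f = 0)
    (hg : constantCoeff g = 0) (hfg : ∀ i ≤ m, coeff i f = coeff i g) (A : ℂ⟦X⟧) :
    coeff m (pscomp A f * d⁄dX ℂ f) - coeff m (pscomp A g * d⁄dX ℂ g) =
      constantCoeff A * (m + 1) * (coeff (m + 1) f - coeff (m + 1) g) := by
  rw [coeff_mul, coeff_mul, ← sum_sub_distrib, sum_eq_single (0, m)]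
  · rw [coeff_zero_pscomp, coeff_zero_pscomp, coeff_derivative, coeff_derivative]
    ring
  · rintro ⟨i, j⟩ hij hne
    rw [HasAntidiagonal.mem_antidiagonal] at hij
    have hi : 1 ≤ i := by
      by_contra! hi
      exact hne (by ext <;> simp <;> omega)
    simp only [coeff_derivative, coeff_pscomp_eq_of_coeff_eq hf hg hfg A (j := i) (by omega),
      hfg (j + 1) (by omega), sub_self]
  · simp

end Composition

noncomputable def assocDefect (ν : ℕ) (A B f : ℂ⟦X⟧) : ℂ⟦X⟧ :=
  X ^ (ν + 1) * pscomp A f * d⁄dX ℂ f - pscomp B f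

section Solutions

variable {ν m : ℕ} {A B s f g : ℂ⟦X⟧}

theorem coeff_assocDefect_sub (hm : 1 ≤ m) (hB : ∀ k ≤ ν, coeff k B = 0)
    (hf : constantCoeff f = 0) (hg : constantCoeff g = 0) (hfg : ∀ i ≤ m, coeff i f = coeff i g) :
    coeff (m + (ν + 1)) (assocDefect ν A B f) - coeff (m + (ν + 1)) (assocDefect ν A B g) =
      (constantCoeff A * (m + 1) - (ν + 1) * coeff (ν + 1) B * coeff 1 f ^ ν) *
        (coeff (m + 1) f - coeff (m + 1) g) := by
  have hA := coeff_pscomp_mul_derivative_sub hf hg hfg A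
  have hB := coeff_pscomp_sub_coeff_pscomp hm hB hf hg hfg
  simp only [assocDefect, map_sub, mul_assoc, coeff_X_pow_mul] at *
  linear_combination hA - hB

theorem constantCoeff_eq_of_assocDefect_eq_zero (hB : ∀ k ≤ ν, coeff k B = 0)
    (hs0 : constantCoeff s = 0) (hs1 : coeff 1 s ≠ 0) (hs : assocDefect ν A B s = 0) :
    constantCoeff A = coeff (ν + 1) B * coeff 1 s ^ ν := by
  have h := congrArg (coeff (0 + (ν + 1))) hs
  rw [assocDefect, map_sub, mul_assoc, coeff_X_pow_mul, zero_add, coeff_pscomp,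
    sum_eq_single (ν + 1), coeff_pow_self hs0] at h
  · simp only [coeff_mul, Nat.antidiagonal_zero, sum_singleton, coeff_zero_pscomp,
      coeff_derivative, map_zero, sub_eq_zero] at h
    apply mul_right_cancel₀ hs1
    linear_combination h
  · intro k _ hk
    rw [hB k (by simp at *; omega), zero_mul]
  · simp

theorem coeff_assocDefect_of_coeff_eq (hm : 1 ≤ m) (hB : ∀ k ≤ ν, coeff k B = 0)
    (hs0 : constantCoeff s = 0) (hs1 : coeff 1 s ≠ 0) (hs : assocDefect ν A B s = 0)
    (hg : constantCoeff g = 0) (hsg : ∀ i ≤ m, coeff i s = coeff i g) :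
    coeff (m + (ν + 1)) (assocDefect ν A B g) =
      constantCoeff A * (ν - m) * (coeff (m + 1) s - coeff (m + 1) g) := by
  have h := coeff_assocDefect_sub (A := A) hm hB hs0 hg hsg
  rw [hs, map_zero] at h
  linear_combination -h - (ν + 1) * (coeff (m + 1) s - coeff (m + 1) g) *
    constantCoeff_eq_of_assocDefect_eq_zero hB hs0 hs1 hs

theorem eq_of_assocDefect_eq_zero (hA : constantCoeff A ≠ 0) (hB : ∀ k ≤ ν, coeff k B = 0)
    {s₁ s₂ : ℂ⟦X⟧} (hs₁0 : constantCoeff s₁ = 0) (hs₁1 : coeff 1 s₁ ≠ 0)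
    (hs₂0 : constantCoeff s₂ = 0) (hs₁ : assocDefect ν A B s₁ = 0)
    (hs₂ : assocDefect ν A B s₂ = 0) (h : ∀ i ≤ ν + 1, coeff i s₁ = coeff i s₂) : s₁ = s₂ := by
  have hagree : ∀ m, ν + 1 ≤ m → ∀ i ≤ m, coeff i s₁ = coeff i s₂ := by
    refine Nat.le_induction h fun m hm ih i hi => ?_
    rcases Nat.lt_or_eq_of_le hi with hi | rfl
    · exact ih i (by omega)
    have hrec := coeff_assocDefect_of_coeff_eq (by omega) hB hs₁0 hs₁1 hs₁ hs₂0 ih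
    rw [hs₂, map_zero, eq_comm, mul_eq_zero, mul_eq_zero, sub_eq_zero, sub_eq_zero] at hrec
    refine hrec.resolve_left (not_or.mpr ⟨hA, fun hνm => ?_⟩)
    exact absurd (by exact_mod_cast hνm : ν = m) (by omega)
  exact ext fun n => hagree (max n (ν + 1)) (le_max_right _ _) n (le_max_left _ _)

end Solutions

/-- `invSq 0 = 0` because `0⁻¹ = 0`, so a bound `‖a n‖ ≤ M * c ^ n * invSq n` forces `a 0 = 0`. -/
noncomputable def invSq (n : ℕ) : ℝ := ((n : ℝ) ^ 2)⁻¹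

section InvSq

@[simp] theorem invSq_zero : invSq 0 = 0 := by simp [invSq]

theorem invSq_nonneg (n : ℕ) : 0 ≤ invSq n := by unfold invSq; positivity

theorem invSq_le_one (n : ℕ) : invSq n ≤ 1 := by
  rcases n.eq_zero_or_pos with rfl | hn
  · simp
  · exact inv_le_one_of_one_le₀ (one_le_pow₀ (by exact_mod_cast hn))

theorem invSq_le_invSq {m n : ℕ} (hm : 1 ≤ m) (hmn : m ≤ n) : invSq n ≤ invSq m := by
  have hm' : (0 : ℝ) < m := by exact_mod_cast hm
  unfold invSq
  gcongr

theorem sum_range_invSq_le_two (n : ℕ) : ∑ i ∈ range n, invSq i ≤ 2 := by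
  rcases n.eq_zero_or_pos with rfl | hn
  · simp
  rw [range_eq_Ico, ← sum_Ioo_add_eq_sum_Ico hn, invSq_zero, add_zero]
  simpa [invSq] using sum_Ioo_inv_sq_le (α := ℝ) 0 n

theorem invSq_mul_invSq_le (i j : ℕ) :
    invSq i * invSq j ≤ 2 * invSq (i + j) * (invSq i + invSq j) := by
  have hi0 := invSq_nonneg i
  have hj0 := invSq_nonneg j
  rcases i.eq_zero_or_pos with rfl | hi
  · simp; positivity
  rcases j.eq_zero_or_pos with rfl | hj
  · simp; positivity
  have hi' : (0 : ℝ) < i := by exact_mod_cast hi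
  have hj' : (0 : ℝ) < j := by exact_mod_cast hj
  unfold invSq
  push_cast
  field_simp
  nlinarith [sq_nonneg ((i : ℝ) - j)]

theorem sum_antidiagonal_invSq_mul_le (n : ℕ) :
    ∑ p ∈ antidiagonal n, invSq p.1 * invSq p.2 ≤ 8 * invSq n := by
  calc ∑ p ∈ antidiagonal n, invSq p.1 * invSq p.2
      ≤ ∑ p ∈ antidiagonal n, 2 * invSq n * (invSq p.1 + invSq p.2) := by
        refine sum_le_sum fun p hp => ?_
        rw [← HasAntidiagonal.mem_antidiagonal.mp hp]
        exact invSq_mul_invSq_le p.1 p.2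
    _ = 2 * invSq n * (2 * ∑ i ∈ range (n + 1), invSq i) := by
        have hswap : ∑ p ∈ antidiagonal n, invSq p.2 = ∑ p ∈ antidiagonal n, invSq p.1 :=
          Nat.sum_antidiagonal_swap (f := fun p => invSq p.1)
        rw [← mul_sum, sum_add_distrib, hswap,
          Nat.sum_antidiagonal_eq_sum_range_succ (fun i _ => invSq i)]
        ring
    _ ≤ 2 * invSq n * (2 * 2) := by
        have := invSq_nonneg n
        gcongr
        exact sum_range_invSq_le_two _
    _ = 8 * invSq n := by ring

end InvSq

section Majorants

variable {𝔸 : Type*} [NormedRing 𝔸] {f : 𝔸⟦X⟧} {M c : ℝ}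

theorem norm_coeff_pow_le (hM : 0 ≤ M) (hc : 0 ≤ c)
    (hf : ∀ n, ‖coeff n f‖ ≤ M * c ^ n * invSq n) {k : ℕ} (hk : 1 ≤ k) (n : ℕ) :
    ‖coeff n (f ^ k)‖ ≤ (8 * M) ^ k / 8 * c ^ n * invSq n := by
  induction k, hk using Nat.le_induction generalizing n with
  | base => simpa using hf n
  | succ k hk ih =>
    rw [pow_succ, coeff_mul]
    calc ‖∑ p ∈ antidiagonal n, coeff p.1 (f ^ k) * coeff p.2 f‖
        ≤ ∑ p ∈ antidiagonal n,
            (8 * M) ^ k / 8 * c ^ p.1 * invSq p.1 * (M * c ^ p.2 * invSq p.2) := by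
          refine (norm_sum_le _ _).trans (sum_le_sum fun p _ => ?_)
          have := invSq_nonneg p.1
          exact (norm_mul_le _ _).trans
            (mul_le_mul (ih p.1) (hf p.2) (norm_nonneg _) (by positivity))
      _ = (8 * M) ^ k / 8 * M * c ^ n * ∑ p ∈ antidiagonal n, invSq p.1 * invSq p.2 := by
          rw [mul_sum]
          refine sum_congr rfl fun p hp => ?_
          rw [← HasAntidiagonal.mem_antidiagonal.mp hp, pow_add]
          ring
      _ ≤ (8 * M) ^ k / 8 * M * c ^ n * (8 * invSq n) := by
          gcongr
          exact sum_antidiagonal_invSq_mul_le n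
      _ = (8 * M) ^ (k + 1) / 8 * c ^ n * invSq n := by ring

theorem norm_sum_Ico_coeff_mul_coeff_pow_le {A : 𝔸⟦X⟧} {K R : ℝ} (hR : 0 ≤ R) (hM : 0 ≤ M)
    (hc : 0 ≤ c) (hA : ∀ k, ‖coeff k A‖ ≤ K * R ^ k) (hq : 8 * R * M ≤ 1 / 2)
    (hf : ∀ n, ‖coeff n f‖ ≤ M * c ^ n * invSq n) {a : ℕ} (ha : 1 ≤ a) (N n : ℕ) :
    ‖∑ k ∈ Ico a N, coeff k A * coeff n (f ^ k)‖ ≤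
      K / 4 * (8 * R * M) ^ a * c ^ n * invSq n := by
  have hK : 0 ≤ K := by simpa using (norm_nonneg _).trans (hA 0)
  have hn := invSq_nonneg n
  have hgeom : ∑ k ∈ Ico a N, (8 * R * M) ^ k ≤ 2 * (8 * R * M) ^ a := by
    have hqa : 0 ≤ (8 * R * M) ^ a := by positivity
    refine (geom_sum_Ico_le_of_lt_one (by positivity) (by linarith)).trans ?_
    rw [div_le_iff₀ (by linarith)]
    nlinarith
  calc _ ≤ ∑ k ∈ Ico a N, K / 8 * c ^ n * invSq n * (8 * R * M) ^ k := by
        refine (norm_sum_le _ _).trans (sum_le_sum fun k hk => ?_)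
        calc _ ≤ K * R ^ k * ((8 * M) ^ k / 8 * c ^ n * invSq n) :=
              (norm_mul_le _ _).trans <| mul_le_mul (hA k)
                (norm_coeff_pow_le hM hc hf (ha.trans (mem_Ico.mp hk).1) n)
                (norm_nonneg _) (by positivity)
          _ = _ := by ring
    _ = K / 8 * c ^ n * invSq n * ∑ k ∈ Ico a N, (8 * R * M) ^ k := (mul_sum ..).symm
    _ ≤ K / 8 * c ^ n * invSq n * (2 * (8 * R * M) ^ a) := by gcongr
    _ = _ := by ring

theorem eventually_norm_coeff_le_mul_pow {A : 𝔸⟦X⟧}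
    (hA : ∃ r : ℝ, 0 < r ∧ Summable fun i : ℕ => ‖coeff i A‖ * r ^ i) :
    ∀ᶠ KR : ℝ × ℝ in atTop, ∀ k, ‖coeff k A‖ ≤ KR.1 * KR.2 ^ k := by
  obtain ⟨r, hr, hsum⟩ := hA
  filter_upwards [eventually_ge_atTop (∑' i, ‖coeff i A‖ * r ^ i, r⁻¹)] with ⟨K, R⟩ hKR k
  obtain ⟨hK, hR⟩ := Prod.mk_le_mk.mp hKR
  have hK0 : 0 ≤ ∑' i, ‖coeff i A‖ * r ^ i := tsum_nonneg fun i => by positivity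
  calc ‖coeff k A‖ = ‖coeff k A‖ * r ^ k * r⁻¹ ^ k := by
        rw [mul_assoc, ← mul_pow, mul_inv_cancel₀ hr.ne', one_pow, mul_one]
    _ ≤ K * R ^ k := by
        have : 0 ≤ K := hK0.trans hK
        have : 0 ≤ r⁻¹ := by positivity
        gcongr
        exact (hsum.le_tsum k fun i _ => by positivity).trans hK

theorem exists_summable_of_norm_coeff_le (hc : 0 < c)
    (hf : ∀ n, ‖coeff n f‖ ≤ M * c ^ n) :
    ∃ r : ℝ, 0 < r ∧ Summable fun i : ℕ => ‖coeff i f‖ * r ^ i := by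
  refine ⟨(2 * c)⁻¹, by positivity, .of_nonneg_of_le (fun i => by positivity) (fun i => ?_)
    (summable_geometric_two.mul_left M)⟩
  calc ‖coeff i f‖ * (2 * c)⁻¹ ^ i ≤ M * c ^ i * (2 * c)⁻¹ ^ i := by gcongr; exact hf i
    _ = M * (1 / 2) ^ i := by rw [mul_assoc, ← mul_pow]; field_simp

theorem eventually_norm_coeff_le {s : 𝔸⟦X⟧} (hs0 : constantCoeff s = 0) (hs1 : coeff 1 s ≠ 0)
    (n : ℕ) : ∀ᶠ b in atTop, ‖coeff n s‖ ≤ b⁻¹ * (‖coeff 1 s‖ * b) ^ n * invSq n := by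
  have hp : 0 < ‖coeff 1 s‖ := norm_pos_iff.mpr hs1
  match n with
  | 0 => exact .of_forall fun b => by simp [hs0]
  | 1 =>
    filter_upwards [eventually_gt_atTop 0] with b hb
    rw [pow_one, mul_comm _ b, inv_mul_cancel_left₀ hb.ne']
    simp [invSq]
  | n + 2 =>
    have hgrow : Tendsto (fun b : ℝ => ‖coeff 1 s‖ ^ (n + 2) * invSq (n + 2) * b ^ (n + 1))
        atTop atTop :=
      (tendsto_pow_atTop n.succ_ne_zero).const_mul_atTop (by unfold invSq; positivity)
    filter_upwards [hgrow.eventually_ge_atTop ‖coeff (n + 2) s‖, eventually_gt_atTop 0]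
      with b hb hb0
    refine hb.trans_eq ?_
    rw [mul_pow, pow_succ b (n + 1)]
    field_simp

end Majorants

section CompositionBounds

variable {A B f : ℂ⟦X⟧} {K R M c : ℝ} (hR : 0 ≤ R) (hM : 0 ≤ M) (hc : 0 ≤ c)
  (hq : 8 * R * M ≤ 1 / 2) (hf : ∀ n, ‖coeff n f‖ ≤ M * c ^ n * invSq n)
include hR hM hc hq hf

theorem norm_coeff_pscomp_le (hA : ∀ k, ‖coeff k A‖ ≤ K * R ^ k) {n : ℕ} (hn : 1 ≤ n) :
    ‖coeff n (pscomp A f)‖ ≤ 2 * K * R * M * c ^ n * invSq n := by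
  rw [coeff_pscomp, ← sum_range_add_sum_Ico _ (by omega : 1 ≤ n + 1), sum_range_one, pow_zero,
    coeff_one, if_neg (by omega), mul_zero, zero_add]
  refine (norm_sum_Ico_coeff_mul_coeff_pow_le hR hM hc hA hq hf le_rfl _ n).trans_eq ?_
  ring

theorem norm_coeff_pscomp_le_of_coeff_eq_zero {ν : ℕ} (hB : ∀ k ≤ ν, coeff k B = 0)
    (hKB : ∀ k, ‖coeff k B‖ ≤ K * R ^ k) {n : ℕ} (hn : ν ≤ n) :
    ‖coeff n (pscomp B f)‖ ≤ K / 4 * (8 * R * M) ^ (ν + 1) * c ^ n * invSq n := by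
  rw [coeff_pscomp, ← sum_range_add_sum_Ico _ (by omega : ν + 1 ≤ n + 1),
    sum_eq_zero fun k hk => by rw [hB k (by simp at hk; omega), zero_mul], zero_add]
  exact norm_sum_Ico_coeff_mul_coeff_pow_le hR hM hc hKB hq hf (by omega) _ n

theorem norm_coeff_pscomp_mul_derivative_le (hA : ∀ k, ‖coeff k A‖ ≤ K * R ^ k) {m : ℕ}
    (hfm : coeff (m + 1) f = 0) :
    ‖coeff m (pscomp A f * d⁄dX ℂ f)‖ ≤
      16 * K * R * M ^ 2 * (m + 1) * c ^ (m + 1) * invSq (m + 1) := by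
  have hK : 0 ≤ K := by simpa using (norm_nonneg _).trans (hA 0)
  set C := 2 * K * R * M ^ 2 * (m + 1) * c ^ (m + 1)
  have hC : 0 ≤ C := by positivity
  rw [coeff_mul]
  calc _ ≤ ∑ p ∈ antidiagonal m, C * (invSq p.1 * invSq (p.2 + 1)) := by
        refine (norm_sum_le _ _).trans (sum_le_sum fun ⟨i, j⟩ hij => ?_)
        rw [HasAntidiagonal.mem_antidiagonal] at hij
        dsimp only at hij ⊢
        have hi0 := invSq_nonneg i
        have hj0 := invSq_nonneg (j + 1)
        rw [coeff_derivative, norm_mul, norm_mul]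
        rcases i.eq_zero_or_pos with rfl | hi
        · rw [zero_add] at hij
          rw [hij, hfm, norm_zero, zero_mul, mul_zero]
          exact mul_nonneg hC (mul_nonneg hi0 (invSq_nonneg _))
        have hj : ‖((j : ℂ) + 1)‖ ≤ m + 1 := by
          rw [show ((j : ℂ) + 1) = ((j + 1 : ℕ) : ℂ) by push_cast; ring, Complex.norm_natCast]
          push_cast
          linarith [(by exact_mod_cast (by omega : j ≤ m) : (j : ℝ) ≤ m)]
        calc _ ≤ 2 * K * R * M * c ^ i * invSq i * (M * c ^ (j + 1) * invSq (j + 1) * (m + 1)) :=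
              mul_le_mul (norm_coeff_pscomp_le hR hM hc hq hf hA hi)
                (mul_le_mul (hf _) hj (norm_nonneg _) (by positivity)) (by positivity)
                (by positivity)
          _ = _ := by
            simp only [C]
            rw [← hij, show i + j + 1 = i + (j + 1) by ring, pow_add]
            ring
    _ = C * ∑ p ∈ antidiagonal (m + 1), invSq p.1 * invSq p.2 := by
        rw [Nat.sum_antidiagonal_succ', invSq_zero, mul_zero, zero_add, mul_sum]
    _ ≤ C * (8 * invSq (m + 1)) := by
        gcongr
        exact sum_antidiagonal_invSq_mul_le _
    _ = _ := by simp only [C]; ring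

end CompositionBounds

section Step

variable {ν m : ℕ} {A B : ℂ⟦X⟧} {K R M c : ℝ} (hR : 0 ≤ R) (hM : 0 ≤ M) (hc : 0 ≤ c)
  (hKA : ∀ k, ‖coeff k A‖ ≤ K * R ^ k) (hKB : ∀ k, ‖coeff k B‖ ≤ K * R ^ k)
  (hq : 8 * R * M ≤ 1 / 2) (hMA : 64 * K * R * M ≤ ‖constantCoeff A‖) (hm : 2 * ν + 1 ≤ m)
  (hmA : K / 4 * (8 * R) ^ (ν + 1) * (M * c) ^ ν ≤ ‖constantCoeff A‖ / 2 * (m - ν))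
include hR hM hc hKA hKB hq hMA hm hmA

theorem norm_coeff_assocDefect_le (hB : ∀ k ≤ ν, coeff k B = 0) {f : ℂ⟦X⟧}
    (hf : ∀ n, ‖coeff n f‖ ≤ M * c ^ n * invSq n) (hfm : coeff (m + 1) f = 0) :
    ‖coeff (m + (ν + 1)) (assocDefect ν A B f)‖ ≤
      ‖constantCoeff A‖ * (m - ν) * (M * c ^ (m + 1) * invSq (m + 1)) := by
  set E := M * c ^ (m + 1) * invSq (m + 1)
  have hK : 0 ≤ K := by simpa using (norm_nonneg _).trans (hKA 0)
  have hmν : (2 * ν + 1 : ℝ) ≤ m := by exact_mod_cast hm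
  have hAterm : ‖coeff m (pscomp A f * d⁄dX ℂ f)‖ ≤ ‖constantCoeff A‖ / 2 * (m - ν) * E := by
    refine (norm_coeff_pscomp_mul_derivative_le hR hM hc hq hf hKA hfm).trans ?_
    have hm2 : (m : ℝ) + 1 ≤ 2 * (m - ν) := by linarith
    have hE : 0 ≤ E := by have := invSq_nonneg (m + 1); positivity
    calc _ = 16 * K * R * M * ((m : ℝ) + 1) * E := by simp only [E]; ring
      _ ≤ 16 * K * R * M * (2 * (m - ν)) * E := by gcongr
      _ = 32 * K * R * M * (m - ν) * E := by ring
      _ ≤ ‖constantCoeff A‖ / 2 * (m - ν) * E := by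
          have : (0 : ℝ) ≤ m - ν := by linarith
          gcongr
          linarith
  have hBterm : ‖coeff (m + (ν + 1)) (pscomp B f)‖ ≤ ‖constantCoeff A‖ / 2 * (m - ν) * E := by
    refine (norm_coeff_pscomp_le_of_coeff_eq_zero hR hM hc hq hf hB hKB (by omega)).trans ?_
    calc _ = K / 4 * (8 * R) ^ (ν + 1) * (M * c) ^ ν * (M * c ^ (m + 1))
          * invSq (m + (ν + 1)) := by ring
      _ ≤ ‖constantCoeff A‖ / 2 * (m - ν) * (M * c ^ (m + 1)) * invSq (m + 1) := by
          have := invSq_nonneg (m + (ν + 1))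
          have : (0 : ℝ) ≤ m - ν := by linarith
          gcongr
          exact invSq_le_invSq (m := m + 1) (n := m + (ν + 1)) (by omega) (by omega)
      _ = _ := by simp only [E]; ring
  rw [assocDefect, map_sub, mul_assoc, coeff_X_pow_mul]
  refine (norm_sub_le _ _).trans ?_
  linarith

theorem norm_coeff_succ_le_of_assocDefect_eq_zero (hA : constantCoeff A ≠ 0)
    (hB : ∀ k ≤ ν, coeff k B = 0) {s : ℂ⟦X⟧} (hs0 : constantCoeff s = 0) (hs1 : coeff 1 s ≠ 0)
    (hs : assocDefect ν A B s = 0) (hsm : ∀ i ≤ m, ‖coeff i s‖ ≤ M * c ^ i * invSq i) :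
    ‖coeff (m + 1) s‖ ≤ M * c ^ (m + 1) * invSq (m + 1) := by
  -- The truncation `σ` agrees with `s` up to `m` and vanishes at `m + 1`, so the recursion
  -- expresses `s_{m+1}` through the defect of `σ`, which only involves known coefficients.
  set σ : ℂ⟦X⟧ := ↑(trunc (m + 1) s)
  have hσ_coeff (i : ℕ) : coeff i σ = if i ≤ m then coeff i s else 0 := by
    simp [σ, Polynomial.coeff_coe, coeff_trunc]
  have hσ (n : ℕ) : ‖coeff n σ‖ ≤ M * c ^ n * invSq n := by
    rw [hσ_coeff]
    split_ifs with hn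
    · exact hsm n hn
    · have := invSq_nonneg n
      rw [norm_zero]
      positivity
  have hσ0 : constantCoeff σ = 0 := by
    rw [← coeff_zero_eq_constantCoeff_apply, hσ_coeff, if_pos (Nat.zero_le _),
      coeff_zero_eq_constantCoeff_apply, hs0]
  have hσm : coeff (m + 1) σ = 0 := by rw [hσ_coeff, if_neg (by omega)]
  have hrec := coeff_assocDefect_of_coeff_eq (m := m) (by omega) hB hs0 hs1 hs hσ0
    fun i hi => by rw [hσ_coeff, if_pos hi]
  have hmν : (0 : ℝ) < m - ν := by
    rw [sub_pos]; exact_mod_cast (by omega : ν < m)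
  have hnorm : ‖coeff (m + (ν + 1)) (assocDefect ν A B σ)‖ =
      ‖constantCoeff A‖ * (m - ν) * ‖coeff (m + 1) s‖ := by
    rw [hrec, hσm, sub_zero, norm_mul, norm_mul, ← norm_neg ((ν : ℂ) - m), neg_sub,
      show (m : ℂ) - ν = ((m - ν : ℝ) : ℂ) by push_cast; ring, Complex.norm_real,
      Real.norm_of_nonneg hmν.le]
  have hD := norm_coeff_assocDefect_le hR hM hc hKA hKB hq hMA hm hmA hB hσ hσm
  rw [hnorm] at hD
  exact le_of_mul_le_mul_left hD (mul_pos (norm_pos_iff.mpr hA) hmν)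

end Step

theorem exists_summable_of_assocDefect_eq_zero {ν : ℕ} {A B s : ℂ⟦X⟧}
    (hA : constantCoeff A ≠ 0) (hB : ∀ k ≤ ν, coeff k B = 0) (hs0 : constantCoeff s = 0)
    (hs1 : coeff 1 s ≠ 0) (hs : assocDefect ν A B s = 0)
    (hAconv : ∃ r : ℝ, 0 < r ∧ Summable fun i : ℕ => ‖coeff i A‖ * r ^ i)
    (hBconv : ∃ r : ℝ, 0 < r ∧ Summable fun i : ℕ => ‖coeff i B‖ * r ^ i) :
    ∃ r : ℝ, 0 < r ∧ Summable fun i : ℕ => ‖coeff i s‖ * r ^ i := by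
  obtain ⟨⟨K, R⟩, hKA, hKB, hR⟩ := ((eventually_norm_coeff_le_mul_pow hAconv).and
    ((eventually_norm_coeff_le_mul_pow hBconv).and (eventually_ge_atTop (0, 0)))).exists
  dsimp only at hKA hKB
  have hR : 0 ≤ R := (Prod.mk_le_mk.mp hR).2
  set p := ‖coeff 1 s‖
  have hp : 0 < p := norm_pos_iff.mpr hs1
  have ha : 0 < ‖constantCoeff A‖ := norm_pos_iff.mpr hA
  obtain ⟨N, hN⟩ := eventually_atTop.mp <| (eventually_ge_atTop (2 * ν + 1)).and <|
    ((tendsto_atTop_add_const_right _ (-ν : ℝ) tendsto_natCast_atTop_atTop).const_mul_atTop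
      (half_pos ha)).eventually_ge_atTop (K / 4 * (8 * R) ^ (ν + 1) * p ^ ν)
  have hsmall (C ε : ℝ) (hε : 0 < ε) : ∀ᶠ b : ℝ in atTop, C * b⁻¹ ≤ ε := by
    simpa using (tendsto_inv_atTop_zero.const_mul C).eventually_le_const (by simpa using hε)
  obtain ⟨b, hb, hbq, hbA, hbase⟩ := ((eventually_gt_atTop 0).and <|
    (hsmall (8 * R) (1 / 2) (by norm_num)).and <| (hsmall (64 * K * R) _ ha).and <|
      (Set.finite_Iic N).eventually_all.mpr fun n _ => eventually_norm_coeff_le hs0 hs1 n).exists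
  -- With `M = b⁻¹` and `c = p * b`, the product `M * c = p` does not depend on `b`, so neither
  -- does `N`; taking `b` large afterwards covers the finitely many indices `n ≤ N`.
  have hMc : b⁻¹ * (p * b) = p := by field_simp
  have hbound (n : ℕ) : ‖coeff n s‖ ≤ b⁻¹ * (p * b) ^ n * invSq n := by
    induction n using Nat.strong_induction_on with
    | _ n ih =>
      rcases le_or_gt n N with hn | hn
      · exact hbase n hn
      obtain ⟨m, rfl⟩ : ∃ m, n = m + 1 := ⟨n - 1, by omega⟩
      obtain ⟨hmν, hmA⟩ := hN m (by omega)
      exact norm_coeff_succ_le_of_assocDefect_eq_zero hR (by positivity) (by positivity) hKA hKB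
        (by linarith) (by linarith) hmν (by rw [hMc]; linarith) hA hB hs0 hs1 hs
        fun i hi => ih i (by omega)
  exact exists_summable_of_norm_coeff_le (M := b⁻¹) (by positivity) fun n =>
    (hbound n).trans (mul_le_of_le_one_right (by positivity) (invSq_le_one n))

theorem assoc_equation_at_infinity_general
    (ν : ℕ) (A B : PowerSeries ℂ)
    (hA : PowerSeries.constantCoeff A ≠ 0)
    (hB : B.order = ((ν + 1 : ℕ))) :
    (∀ s : PowerSeries ℂ, s.order = 1 →
      PowerSeries.X ^ (ν + 1) * pscomp A s * s.derivativeFun = pscomp B s →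
      (PowerSeries.coeff 1 s) ^ ν =
        PowerSeries.constantCoeff A / PowerSeries.coeff (ν + 1) B) ∧
    (∀ s₁ s₂ : PowerSeries ℂ, s₁.order = 1 → s₂.order = 1 →
      PowerSeries.X ^ (ν + 1) * pscomp A s₁ * s₁.derivativeFun = pscomp B s₁ →
      PowerSeries.X ^ (ν + 1) * pscomp A s₂ * s₂.derivativeFun = pscomp B s₂ →
      (∀ i : ℕ, i ≤ ν + 1 → PowerSeries.coeff i s₁ = PowerSeries.coeff i s₂) →
      s₁ = s₂) ∧
    ((∃ r : ℝ, 0 < r ∧ Summable fun i : ℕ => ‖PowerSeries.coeff i A‖ * r ^ i) →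
     (∃ r : ℝ, 0 < r ∧ Summable fun i : ℕ => ‖PowerSeries.coeff i B‖ * r ^ i) →
     ∀ s : PowerSeries ℂ, s.order = 1 →
      PowerSeries.X ^ (ν + 1) * pscomp A s * s.derivativeFun = pscomp B s →
      ∃ r : ℝ, 0 < r ∧ Summable fun i : ℕ => ‖PowerSeries.coeff i s‖ * r ^ i) := by
  obtain ⟨hBtop, hBlow⟩ := order_eq_nat.mp hB
  have hB' : ∀ k ≤ ν, coeff k B = 0 := fun k hk => hBlow k (by omega)
  have horder {s : ℂ⟦X⟧} (hs : s.order = 1) : constantCoeff s = 0 ∧ coeff 1 s ≠ 0 := by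
    obtain ⟨h1, h0⟩ := (order_eq_nat (n := 1)).mp (by exact_mod_cast hs)
    exact ⟨by simpa using h0 0 one_pos, h1⟩
  refine ⟨fun s hs heq => ?_, fun s₁ s₂ hs₁ hs₂ heq₁ heq₂ hagree => ?_, fun hAc hBc s hs heq => ?_⟩
  · rw [eq_div_iff hBtop, mul_comm, ← constantCoeff_eq_of_assocDefect_eq_zero hB' (horder hs).1
      (horder hs).2 (sub_eq_zero.mpr heq)]
  · exact eq_of_assocDefect_eq_zero hA hB' (horder hs₁).1 (horder hs₁).2 (horder hs₂).1
      (sub_eq_zero.mpr heq₁) (sub_eq_zero.mpr heq₂) hagree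
  · exact exists_summable_of_assocDefect_eq_zero hA hB' (horder hs).1 (horder hs).2
      (sub_eq_zero.mpr heq) hAc hBc

/-- Properties of order-one solutions `s` of the associated differential equation
`t^{ν+1} A(s(t)) s'(t) = B(s(t))` when `A(0) ≠ 0` and `ord B = ν + 1`:
(i) `(coeff₁ s)^ν = A(0) / coeff_{ν+1}(B)`; (ii) two solutions agreeing in all
coefficients of index `≤ ν + 1` are equal; (iii) if `A` and `B` are convergent,
every solution is convergent. -/
theorem assoc_equation_at_infinity
    (ν : ℕ) (hν : 1 ≤ ν) (A B : PowerSeries ℂ)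
    (hA : PowerSeries.constantCoeff A ≠ 0)
    (hB : B.order = ((ν + 1 : ℕ))) :
    (∀ s : PowerSeries ℂ, s.order = 1 →
      PowerSeries.X ^ (ν + 1) * pscomp A s * s.derivativeFun = pscomp B s →
      (PowerSeries.coeff 1 s) ^ ν =
        PowerSeries.constantCoeff A / PowerSeries.coeff (ν + 1) B) ∧
    (∀ s₁ s₂ : PowerSeries ℂ, s₁.order = 1 → s₂.order = 1 →
      PowerSeries.X ^ (ν + 1) * pscomp A s₁ * s₁.derivativeFun = pscomp B s₁ →
      PowerSeries.X ^ (ν + 1) * pscomp A s₂ * s₂.derivativeFun = pscomp B s₂ →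
      (∀ i : ℕ, i ≤ ν + 1 → PowerSeries.coeff i s₁ = PowerSeries.coeff i s₂) →
      s₁ = s₂) ∧
    ((∃ r : ℝ, 0 < r ∧ Summable fun i : ℕ => ‖PowerSeries.coeff i A‖ * r ^ i) →
     (∃ r : ℝ, 0 < r ∧ Summable fun i : ℕ => ‖PowerSeries.coeff i B‖ * r ^ i) →
     ∀ s : PowerSeries ℂ, s.order = 1 →
      PowerSeries.X ^ (ν + 1) * pscomp A s * s.derivativeFun = pscomp B s →
      ∃ r : ℝ, 0 < r ∧ Summable fun i : ℕ => ‖PowerSeries.coeff i s‖ * r ^ i) :=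
  assoc_equation_at_infinity_general ν A B hA hB
end
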